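/- The graph 2M_5, the disjoint union of two copies of the maximal outerplanar graph on 5 vertices, is an outerplanar graph on 10 vertices with 14 edges containing no subgraph isomorphic to S_{2,2}; hence ex_OP(10, S_{2,2}) ≥ 14 > ⌊3·9/2⌋ = 13. -/

import Mathlib

open SimpleGraph Finset

/-- `G` contains a copy of the double star `S_{p,q}`: adjacent centers `x, y`,
with `p` leaves attached to `x` and `q` leaves attached to `y`, all distinct. -/
def ContainsDoubleStar {V : Type*} (G : SimpleGraph V) (p q : ℕ) : Prop :=
  ∃ (x y : V) (X Y : Finset V), G.Adj x y ∧ X.card = p ∧ Y.card = q ∧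
    Disjoint X Y ∧ y ∉ X ∧ x ∉ Y ∧ (∀ v ∈ X, G.Adj x v) ∧ (∀ v ∈ Y, G.Adj y v)

/-- A graph is outerplanar iff it admits a one-page book embedding: a linear
ordering of the vertices such that no two edges cross. -/
def IsOuterplanar {V : Type*} (G : SimpleGraph V) : Prop :=
  ∃ σ : V → Fin (Nat.card V), Function.Bijective σ ∧
    ∀ a b c d : V, G.Adj a b → G.Adj c d → ¬ (σ a < σ c ∧ σ c < σ b ∧ σ b < σ d)

/-- `M_5`: the unique maximal outerplanar graph on 5 vertices, a 5-cycle
`0 1 2 3 4` with the two chords `0-2` and `2-4`. -/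
def M5 : SimpleGraph (Fin 5) :=
  SimpleGraph.fromEdgeSet {s(0, 1), s(1, 2), s(2, 3), s(3, 4), s(4, 0), s(0, 2), s(2, 4)}

/-- `2M_5`: the disjoint union of two copies of `M_5`. -/
def twoM5 : SimpleGraph (Fin 5 ⊕ Fin 5) := M5 ⊕g M5

/-! `2M_5` has two components of order 5, and a double star `S_{2,2}` is connected of order 6,
so it fits in neither. Outerplanarity of `2M_5` comes from concatenating one-page book embeddings
of the two copies of `M_5`. -/

def CrossingFree {V : Type*} {n : ℕ} (G : SimpleGraph V) (σ : V → Fin n) : Prop :=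
  ∀ a b c d : V, G.Adj a b → G.Adj c d → ¬ (σ a < σ c ∧ σ c < σ b ∧ σ b < σ d)

section Outerplanar

variable {V W : Type*} {G : SimpleGraph V} {H : SimpleGraph W}

theorem isOuterplanar_iff_exists_equiv :
    IsOuterplanar G ↔ ∃ (n : ℕ) (σ : V ≃ Fin n), CrossingFree G σ := by
  constructor
  · rintro ⟨σ, hσ, hcross⟩
    exact ⟨_, Equiv.ofBijective σ hσ, hcross⟩
  · rintro ⟨n, σ, hcross⟩
    obtain rfl : Nat.card V = n := (Nat.card_congr σ).trans (Nat.card_fin n)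
    exact ⟨σ, σ.bijective, hcross⟩

theorem IsOuterplanar.sum (hG : IsOuterplanar G) (hH : IsOuterplanar H) :
    IsOuterplanar (G ⊕g H) := by
  obtain ⟨m, σ, hσ⟩ := isOuterplanar_iff_exists_equiv.mp hG
  obtain ⟨n, τ, hτ⟩ := isOuterplanar_iff_exists_equiv.mp hH
  refine isOuterplanar_iff_exists_equiv.mpr ⟨m + n, (σ.sumCongr τ).trans finSumFinEquiv, ?_⟩
  -- The copy of `G` occupies the first `m` positions, so an edge of `G` never crosses one of `H`.
  rintro (a | a) (b | b) (c | c) (d | d) hab hcd <;>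
    simp only [sum_adj] at hab hcd <;>
    simp only [Equiv.trans_apply, Equiv.sumCongr_apply, Sum.map_inl, Sum.map_inr,
      finSumFinEquiv_apply_left, finSumFinEquiv_apply_right, Fin.lt_def, Fin.val_castAdd,
      Fin.val_natAdd, Nat.add_lt_add_iff_left]
  · exact hσ a b c d hab hcd
  · omega
  · omega
  · exact hτ a b c d hab hcd

theorem IsOuterplanar.of_iso {G' : SimpleGraph W} (e : G ≃g G') (hG : IsOuterplanar G) :
    IsOuterplanar G' := by
  obtain ⟨n, σ, hσ⟩ := isOuterplanar_iff_exists_equiv.mp hG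
  refine isOuterplanar_iff_exists_equiv.mpr ⟨n, e.toEquiv.symm.trans σ, ?_⟩
  intro a b c d hab hcd
  exact hσ _ _ _ _ (e.symm.map_adj_iff.mpr hab) (e.symm.map_adj_iff.mpr hcd)

end Outerplanar

section DoubleStar

variable {V W : Type*} {G : SimpleGraph V} {p q : ℕ}

theorem ContainsDoubleStar.map {G' : SimpleGraph W} (f : G ↪g G') (h : ContainsDoubleStar G p q) :
    ContainsDoubleStar G' p q := by
  classical
  obtain ⟨x, y, X, Y, hxy, hX, hY, hXY, hyX, hxY, hXadj, hYadj⟩ := h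
  refine ⟨f x, f y, X.map f.toEmbedding, Y.map f.toEmbedding, f.map_adj_iff.mpr hxy,
    by rw [card_map, hX], by rw [card_map, hY], disjoint_map f.toEmbedding |>.mpr hXY,
    ?_, ?_, ?_, ?_⟩
  · simpa using hyX
  · simpa using hxY
  · simpa using hXadj
  · simpa using hYadj

theorem ContainsDoubleStar.exists_le_card_fiber [Finite V] {β : Type*} (f : V → β)
    (hf : ∀ a b, G.Adj a b → f a = f b) (h : ContainsDoubleStar G p q) :
    ∃ c, p + q + 2 ≤ Nat.card {v // f v = c} := by
  classical
  obtain ⟨x, y, X, Y, hxy, hX, hY, hXY, hyX, hxY, hXadj, hYadj⟩ := h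
  have hxX : x ∉ X := fun hx => G.loopless.irrefl x (hXadj x hx)
  have hyY : y ∉ Y := fun hy => G.loopless.irrefl y (hYadj y hy)
  have hcard : #(insert x (insert y (X ∪ Y))) = p + q + 2 := by
    rw [card_insert_of_notMem (by simp [G.ne_of_adj hxy, hxX, hxY]),
      card_insert_of_notMem (by simp [hyX, hyY]), card_union_of_disjoint hXY, hX, hY]
  have hsub : ↑(insert x (insert y (X ∪ Y))) ⊆ {v | f v = f x} := by
    intro v hv
    simp only [coe_insert, coe_union, Set.mem_insert_iff, Set.mem_union, mem_coe] at hv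
    rcases hv with rfl | rfl | hv | hv
    · rfl
    · exact (hf x v hxy).symm
    · exact (hf x v (hXadj v hv)).symm
    · exact ((hf x y hxy).trans (hf y v (hYadj v hv))).symm
  refine ⟨f x, ?_⟩
  rw [← hcard, ← Set.ncard_coe_finset]
  exact (Set.ncard_le_ncard hsub).trans_eq (Nat.card_coe_set_eq _).symm

theorem not_containsDoubleStar_sum [Finite V] [Finite W] {H : SimpleGraph W}
    (hV : Nat.card V < p + q + 2) (hW : Nat.card W < p + q + 2) :
    ¬ ContainsDoubleStar (G ⊕g H) p q := by
  intro h
  obtain ⟨c, hc⟩ := h.exists_le_card_fiber Sum.isLeft fun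
    | .inl _, .inl _, _ | .inr _, .inr _, _ => rfl
  cases c
  · have : Nat.card {v : V ⊕ W // v.isLeft = false} = Nat.card W :=
      Nat.card_congr <| (Equiv.subtypeEquivRight fun v => by simp).trans Equiv.sumIsRight
    omega
  · have : Nat.card {v : V ⊕ W // v.isLeft = true} = Nat.card V :=
      Nat.card_congr Equiv.sumIsLeft
    omega

end DoubleStar

instance : DecidableRel M5.Adj := fun a b =>
  decidable_of_iff (a ≠ b ∧ s(a, b) ∈ ({s(0, 1), s(1, 2), s(2, 3), s(3, 4), s(4, 0), s(0, 2),
    s(2, 4)} : Finset (Sym2 (Fin 5)))) (by simp [M5, and_comm])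

theorem isOuterplanar_M5 : IsOuterplanar M5 :=
  isOuterplanar_iff_exists_equiv.mpr ⟨5, Equiv.refl _, by unfold CrossingFree; decide⟩

theorem card_edgeSet_M5 : Nat.card M5.edgeSet = 7 := by
  rw [Nat.card_eq_fintype_card]
  decide

theorem isOuterplanar_twoM5 : IsOuterplanar twoM5 := isOuterplanar_M5.sum isOuterplanar_M5

theorem card_edgeSet_twoM5 : Nat.card twoM5.edgeSet = 14 := by
  rw [twoM5, Nat.card_congr edgeSetSumEquiv, Nat.card_sum, card_edgeSet_M5]

theorem not_containsDoubleStar_twoM5 : ¬ ContainsDoubleStar twoM5 2 2 :=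
  not_containsDoubleStar_sum (by simp) (by simp)

theorem stmt11 :
    IsOuterplanar twoM5 ∧ Nat.card (Fin 5 ⊕ Fin 5) = 10 ∧
      Nat.card twoM5.edgeSet = 14 ∧ ¬ ContainsDoubleStar twoM5 2 2 ∧
      (∃ G : SimpleGraph (Fin 10), IsOuterplanar G ∧ ¬ ContainsDoubleStar G 2 2 ∧
        14 ≤ Nat.card G.edgeSet) ∧ 3 * (10 - 1) / 2 < 14 := by
  let e : twoM5 ≃g twoM5.map finSumFinEquiv := Iso.map finSumFinEquiv twoM5
  have hG : 14 ≤ Nat.card (twoM5.map finSumFinEquiv).edgeSet := by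
    rw [← Nat.card_congr e.mapEdgeSet, card_edgeSet_twoM5]
  exact ⟨isOuterplanar_twoM5, by simp, card_edgeSet_twoM5, not_containsDoubleStar_twoM5,
    ⟨_, isOuterplanar_twoM5.of_iso e,
      fun h => not_containsDoubleStar_twoM5 (h.map e.symm.toEmbedding), hG⟩, by norm_num⟩
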